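/- arXiv:1904.00348 — 8 statements merged into one kernel-verified Lean document; each statement's English description precedes it below -/
import Mathlib

section
/- The set {27900/17479, 471352/112365, 261770/17479, 185535272/419265, 63737828/526368735, 79554420/408480247} is a rational Diophantine sextuple: the product of any two distinct elements plus 1 is a square of a rational number. -/
/-- The rational Diophantine sextuple obtained for u = -1 in the paper. -/
theorem stmt_3 :
    (({27900/17479, 471352/112365, 261770/17479, 185535272/419265,
        63737828/526368735, 79554420/408480247} : Finset ℚ).card = 6) ∧
    ((0 : ℚ) ∉ ({27900/17479, 471352/112365, 261770/17479, 185535272/419265,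
        63737828/526368735, 79554420/408480247} : Finset ℚ)) ∧
    (∀ a ∈ ({27900/17479, 471352/112365, 261770/17479, 185535272/419265,
        63737828/526368735, 79554420/408480247} : Finset ℚ),
      ∀ b ∈ ({27900/17479, 471352/112365, 261770/17479, 185535272/419265,
        63737828/526368735, 79554420/408480247} : Finset ℚ),
        a ≠ b → ∃ q : ℚ, a * b + 1 = q ^ 2) := by
  refine ⟨by norm_num, by norm_num, ?_⟩
  intro a ha b hb hab
  simp only [Finset.mem_insert, Finset.mem_singleton] at ha hb
  rcases ha with ha|ha|ha|ha|ha|ha <;> rcases hb with hb|hb|hb|hb|hb|hb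
  · exact absurd (ha.trans hb.symm) hab
  · exact ⟨6927/2497, by rw [ha, hb]; norm_num⟩
  · exact ⟨87229/17479, by rw [ha, hb]; norm_num⟩
  · exact ⟨22527/847, by rw [ha, hb]; norm_num⟩
  · exact ⟨56289/51529, by rw [ha, hb]; norm_num⟩
  · exact ⟨61223/53473, by rw [ha, hb]; norm_num⟩
  · exact ⟨6927/2497, by rw [ha, hb]; norm_num⟩
  · exact absurd (ha.trans hb.symm) hab
  · exact ⟨59845/7491, by rw [ha, hb]; norm_num⟩
  · exact ⟨234661/5445, by rw [ha, hb]; norm_num⟩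
  · exact ⟨2847461/2318805, by rw [ha, hb]; norm_num⟩
  · exact ⟨10297/7639, by rw [ha, hb]; norm_num⟩
  · exact ⟨87229/17479, by rw [ha, hb]; norm_num⟩
  · exact ⟨59845/7491, by rw [ha, hb]; norm_num⟩
  · exact absurd (ha.trans hb.symm) hab
  · exact ⟨206875/2541, by rw [ha, hb]; norm_num⟩
  · exact ⟨259295/154587, by rw [ha, hb]; norm_num⟩
  · exact ⟨105827/53473, by rw [ha, hb]; norm_num⟩
  · exact ⟨22527/847, by rw [ha, hb]; norm_num⟩
  · exact ⟨234661/5445, by rw [ha, hb]; norm_num⟩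
  · exact ⟨206875/2541, by rw [ha, hb]; norm_num⟩
  · exact absurd (ha.trans hb.symm) hab
  · exact ⟨830173/112365, by rw [ha, hb]; norm_num⟩
  · exact ⟨5492219/588203, by rw [ha, hb]; norm_num⟩
  · exact ⟨56289/51529, by rw [ha, hb]; norm_num⟩
  · exact ⟨2847461/2318805, by rw [ha, hb]; norm_num⟩
  · exact ⟨259295/154587, by rw [ha, hb]; norm_num⟩
  · exact ⟨830173/112365, by rw [ha, hb]; norm_num⟩
  · exact absurd (ha.trans hb.symm) hab
  · exact ⟨1754381/1734053, by rw [ha, hb]; norm_num⟩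
  · exact ⟨61223/53473, by rw [ha, hb]; norm_num⟩
  · exact ⟨10297/7639, by rw [ha, hb]; norm_num⟩
  · exact ⟨105827/53473, by rw [ha, hb]; norm_num⟩
  · exact ⟨5492219/588203, by rw [ha, hb]; norm_num⟩
  · exact ⟨1754381/1734053, by rw [ha, hb]; norm_num⟩
  · exact absurd (ha.trans hb.symm) hab
end

section
/- Let t1, t2, t3 be rational numbers with (t1·t2·t3)^2 ≠ 1, and define a1 = 2t1(1 + t1t2(1 + t2t3))/((t1t2t3 - 1)(t1t2t3 + 1)), a2 = 2t2(1 + t2t3(1 + t3t1))/((t1t2t3 - 1)(t1t2t3 + 1)), a3 = 2t3(1 + t3t1(1 + t1t2))/((t1t2t3 - 1)(t1t2t3 + 1)). Then each of a1·a2 + 1, a1·a3 + 1, and a2·a3 + 1 is the square of a rational number. -/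
/-!
Write `D = (t₁t₂t₃ - 1)(t₁t₂t₃ + 1)` and `aᵢ = nᵢ / D`. The entries are cyclic rotations of one
another (`a₂`, `a₃` arise from `a₁` under `t₁ → t₂ → t₃ → t₁`), so it suffices to check the single
polynomial identity `n₁ n₂ + D² = (1 + 2t₁t₂ + 2t₁t₂²t₃ + (t₁t₂t₃)²)²`; dividing by `D²` turns it
into `a₁ a₂ + 1 = □`.
-/

theorem exists_div_mul_div_add_one_eq_sq {K : Type*} [Field K] {x y d n : K}
    (h : x * y + d ^ 2 = n ^ 2) : ∃ q : K, x / d * (y / d) + 1 = q ^ 2 := by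
  rcases eq_or_ne d 0 with rfl | hd
  · exact ⟨1, by simp⟩
  · exact ⟨n / d, by field_simp; linear_combination h⟩

theorem lasic_identity {R : Type*} [CommRing R] (x y z : R) :
    2 * x * (1 + x * y * (1 + y * z)) * (2 * y * (1 + y * z * (1 + z * x))) +
        ((x * y * z - 1) * (x * y * z + 1)) ^ 2 =
      (1 + 2 * x * y + 2 * x * y ^ 2 * z + (x * y * z) ^ 2) ^ 2 := by
  ring

theorem stmt_5_general (t1 t2 t3 : ℚ)
    (a1 a2 a3 : ℚ)
    (ha1 : a1 = 2 * t1 * (1 + t1 * t2 * (1 + t2 * t3)) /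
      ((t1 * t2 * t3 - 1) * (t1 * t2 * t3 + 1)))
    (ha2 : a2 = 2 * t2 * (1 + t2 * t3 * (1 + t3 * t1)) /
      ((t1 * t2 * t3 - 1) * (t1 * t2 * t3 + 1)))
    (ha3 : a3 = 2 * t3 * (1 + t3 * t1 * (1 + t1 * t2)) /
      ((t1 * t2 * t3 - 1) * (t1 * t2 * t3 + 1))) :
    (∃ q : ℚ, a1 * a2 + 1 = q ^ 2) ∧ (∃ q : ℚ, a1 * a3 + 1 = q ^ 2) ∧
      (∃ q : ℚ, a2 * a3 + 1 = q ^ 2) := by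
  subst ha1 ha2 ha3
  exact ⟨exists_div_mul_div_add_one_eq_sq (lasic_identity t1 t2 t3),
    exists_div_mul_div_add_one_eq_sq ((by ring : _ = _).trans (lasic_identity t3 t1 t2)),
    exists_div_mul_div_add_one_eq_sq ((by ring : _ = _).trans (lasic_identity t2 t3 t1))⟩

/-- Lasić's symmetric parametrization produces rational Diophantine triples. -/
theorem stmt_5 (t1 t2 t3 : ℚ) (h : (t1 * t2 * t3) ^ 2 ≠ 1)
    (a1 a2 a3 : ℚ)
    (ha1 : a1 = 2 * t1 * (1 + t1 * t2 * (1 + t2 * t3)) /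
      ((t1 * t2 * t3 - 1) * (t1 * t2 * t3 + 1)))
    (ha2 : a2 = 2 * t2 * (1 + t2 * t3 * (1 + t3 * t1)) /
      ((t1 * t2 * t3 - 1) * (t1 * t2 * t3 + 1)))
    (ha3 : a3 = 2 * t3 * (1 + t3 * t1 * (1 + t1 * t2)) /
      ((t1 * t2 * t3 - 1) * (t1 * t2 * t3 + 1))) :
    (∃ q : ℚ, a1 * a2 + 1 = q ^ 2) ∧ (∃ q : ℚ, a1 * a3 + 1 = q ^ 2) ∧
      (∃ q : ℚ, a2 * a3 + 1 = q ^ 2) :=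
  stmt_5_general t1 t2 t3 a1 a2 a3 ha1 ha2 ha3
end

section
/- Let t1, t2, t3 be rational numbers with (t1t2t3)^2 ≠ 1, and let a1, a2, a3 be defined by Lasić's parametrization. Define a4 = -2(1 - t3 + t2t3)(t3t1 + 1 - t1)(-t2 + 1 + t1t2)(t1t2t3 - 1)/(1 + t1t2t3)^3. Then a4 satisfies the regularity equation (a1 + a2 - a3 - a4)^2 = 4(a1a2 + 1)(a3a4 + 1), so that {a1, a2, a3, a4} is a regular quadruple. -/
/-- The first regular extension a4 of a Lasić triple gives a regular quadruple. -/
theorem stmt_6 (t1 t2 t3 : ℚ) (h : (t1 * t2 * t3) ^ 2 ≠ 1)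
    (a1 a2 a3 a4 : ℚ)
    (ha1 : a1 = 2 * t1 * (1 + t1 * t2 * (1 + t2 * t3)) /
      ((t1 * t2 * t3 - 1) * (t1 * t2 * t3 + 1)))
    (ha2 : a2 = 2 * t2 * (1 + t2 * t3 * (1 + t3 * t1)) /
      ((t1 * t2 * t3 - 1) * (t1 * t2 * t3 + 1)))
    (ha3 : a3 = 2 * t3 * (1 + t3 * t1 * (1 + t1 * t2)) /
      ((t1 * t2 * t3 - 1) * (t1 * t2 * t3 + 1)))
    (ha4 : a4 = -2 * (1 - t3 + t2 * t3) * (t3 * t1 + 1 - t1) * (-t2 + 1 + t1 * t2) *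
      (t1 * t2 * t3 - 1) / (1 + t1 * t2 * t3) ^ 3) :
    (a1 + a2 - a3 - a4) ^ 2 = 4 * (a1 * a2 + 1) * (a3 * a4 + 1) := by
  have h1 : t1 * t2 * t3 - 1 ≠ 0 := by
    intro hz; apply h; nlinarith [sq_nonneg (t1*t2*t3)]
  have h2 : t1 * t2 * t3 + 1 ≠ 0 := by
    intro hz; apply h; nlinarith [sq_nonneg (t1*t2*t3)]
  have h3 : 1 + t1 * t2 * t3 ≠ 0 := by intro hz; apply h2; linarith
  subst ha1 ha2 ha3 ha4
  field_simp
  ring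
end

section
/- Let t1, t2, t3 be rational numbers with (t1t2t3)^2 ≠ 1, let a1, a2, a3 be given by Lasić's parametrization, and define a5 = 2(t3 + t2t3 + 1)(t3t1 + t1 + 1)(1 + t2 + t1t2)(1 + t1t2t3)/(t1t2t3 - 1)^3. Then (a1 + a2 - a3 - a5)^2 = 4(a1a2 + 1)(a3a5 + 1). -/
/-- The second regular extension a5 of a Lasić triple gives a regular quadruple. -/
theorem stmt_7 (t1 t2 t3 : ℚ) (h : (t1 * t2 * t3) ^ 2 ≠ 1)
    (a1 a2 a3 a5 : ℚ)
    (ha1 : a1 = 2 * t1 * (1 + t1 * t2 * (1 + t2 * t3)) /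
      ((t1 * t2 * t3 - 1) * (t1 * t2 * t3 + 1)))
    (ha2 : a2 = 2 * t2 * (1 + t2 * t3 * (1 + t3 * t1)) /
      ((t1 * t2 * t3 - 1) * (t1 * t2 * t3 + 1)))
    (ha3 : a3 = 2 * t3 * (1 + t3 * t1 * (1 + t1 * t2)) /
      ((t1 * t2 * t3 - 1) * (t1 * t2 * t3 + 1)))
    (ha5 : a5 = 2 * (t3 + t2 * t3 + 1) * (t3 * t1 + t1 + 1) * (1 + t2 + t1 * t2) *
      (1 + t1 * t2 * t3) / (t1 * t2 * t3 - 1) ^ 3) :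
    (a1 + a2 - a3 - a5) ^ 2 = 4 * (a1 * a2 + 1) * (a3 * a5 + 1) := by
  have h1 : t1 * t2 * t3 - 1 ≠ 0 := by
    intro hc; apply h; have : t1 * t2 * t3 = 1 := by linarith
    rw [this]; norm_num
  have h2 : t1 * t2 * t3 + 1 ≠ 0 := by
    intro hc; apply h; have : t1 * t2 * t3 = -1 := by linarith
    rw [this]; norm_num
  subst ha1 ha2 ha3 ha5
  field_simp
  ring
end

section
/- Let u be a rational number with u ≠ 0, ±4, and set t3 = (16 - u^2)/(6u) and t2 = (u^2 + 10u + 16)/((u-4)(u+4)). Then p1(t2, t3) = 3 + 10·t2·t3 - 3·t3^2 + 3·t3^2·t2^2 = 0. -/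
/-- The substitution t3 = (16-u²)/(6u), t2 = (u²+10u+16)/((u-4)(u+4)) kills
the discriminant factor p1(t2,t3). -/
theorem stmt_9 (u : ℚ) (hu0 : u ≠ 0) (hu4 : u ≠ 4) (hu4' : u ≠ -4)
    (t2 t3 : ℚ)
    (ht3 : t3 = (16 - u ^ 2) / (6 * u))
    (ht2 : t2 = (u ^ 2 + 10 * u + 16) / ((u - 4) * (u + 4))) :
    3 + 10 * t2 * t3 - 3 * t3 ^ 2 + 3 * t3 ^ 2 * t2 ^ 2 = 0 := by
  subst ht2 ht3
  have h4 : u - 4 ≠ 0 := sub_ne_zero.mpr hu4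
  have h4' : u + 4 ≠ 0 := by intro h; apply hu4'; linarith
  field_simp
  ring
end

section
/- Let u be a rational with u ∉ {0, 4, -4, -2, -8, -20} and such that all denominators below are nonzero, and set t2 = (u^2 + 10u + 16)/((u-4)(u+4)), t3 = (16 - u^2)/(6u), t1 = 3(3u^4 + 40u^3 + 368u^2 + 1280u + 1024)/(4(u^2 + 10u + 16)(u + 20)u). Define a1, a2, a3 by Lasić's parametrization and a4, a5 as the regular extensions. Then a4·a5 + 1 is the square of a rational number, so {a1, a2, a3, a4, a5} has all pairwise products plus one equal to rational squares. -/
/-!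
For arbitrary `t₁, t₂, t₃` with `(t₁t₂t₃)² ≠ 1`, nine of the ten conditions hold identically:
`aᵢaⱼ + 1` is the square of an explicit rational function of the `tᵢ`. Cyclically shifting
`(t₁, t₂, t₃)` permutes `a₁, a₂, a₃` and fixes `a₄, a₅`, and `t ↦ -t` negates `a₁, a₂, a₃` and
turns `a₅` into `-a₄`, so only the three pairs `{a₁, a₂}`, `{a₁, a₅}`, `{a₄, a₅}` need a computation.
The last one is special: `a₄a₅ + 1 = Δ / ((t₁t₂t₃)² - 1)²` for a polynomial `Δ` which is not a
square in general, but becomes the square of a rational function of `u` on the given curve.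
-/

section Lasic

variable {K : Type*} [Field K]

def IsDiophantinePair (a b : K) : Prop := ∃ q, a * b + 1 = q ^ 2

theorem IsDiophantinePair.symm {a b : K} (h : IsDiophantinePair a b) : IsDiophantinePair b a := by
  rwa [IsDiophantinePair, mul_comm]

instance : Std.Symm (IsDiophantinePair (K := K)) := ⟨fun _ _ => IsDiophantinePair.symm⟩

theorem isDiophantinePair_neg_neg {a b : K} :
    IsDiophantinePair (-a) (-b) ↔ IsDiophantinePair a b := by
  simp only [IsDiophantinePair, neg_mul_neg]

/-- Lasić's `a₁`; `a₂` and `a₃` are `lasicA t2 t3 t1` and `lasicA t3 t1 t2`. -/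
def lasicA (t1 t2 t3 : K) : K :=
  2 * t1 * (1 + t1 * t2 * (1 + t2 * t3)) / ((t1 * t2 * t3 - 1) * (t1 * t2 * t3 + 1))

def lasicA4 (t1 t2 t3 : K) : K :=
  -2 * (1 - t3 + t2 * t3) * (t3 * t1 + 1 - t1) * (-t2 + 1 + t1 * t2) * (t1 * t2 * t3 - 1) /
    (1 + t1 * t2 * t3) ^ 3

def lasicA5 (t1 t2 t3 : K) : K :=
  2 * (t3 + t2 * t3 + 1) * (t3 * t1 + t1 + 1) * (1 + t2 + t1 * t2) * (1 + t1 * t2 * t3) /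
    (t1 * t2 * t3 - 1) ^ 3

def lasicDisc (t1 t2 t3 : K) : K :=
  ((t1 * t2 * t3) ^ 2 - 1) ^ 2 -
    4 * ((1 - t3 + t2 * t3) * (t3 * t1 + 1 - t1) * (-t2 + 1 + t1 * t2)) *
      ((t3 + t2 * t3 + 1) * (t3 * t1 + t1 + 1) * (1 + t2 + t1 * t2))

theorem lasicA4_rotate (t1 t2 t3 : K) : lasicA4 t2 t3 t1 = lasicA4 t1 t2 t3 := by
  simp only [lasicA4, ← mul_rotate t1 t2 t3]
  ring

theorem lasicA5_rotate (t1 t2 t3 : K) : lasicA5 t2 t3 t1 = lasicA5 t1 t2 t3 := by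
  simp only [lasicA5, ← mul_rotate t1 t2 t3]
  ring

theorem lasicA_neg (t1 t2 t3 : K) : lasicA (-t1) (-t2) (-t3) = -lasicA t1 t2 t3 := by
  have hT : -t1 * -t2 * -t3 = -(t1 * t2 * t3) := by ring
  simp only [lasicA, hT]
  rw [show (-(t1 * t2 * t3) - 1) * (-(t1 * t2 * t3) + 1) =
    (t1 * t2 * t3 - 1) * (t1 * t2 * t3 + 1) by ring]
  ring

theorem lasicA5_neg (t1 t2 t3 : K) : lasicA5 (-t1) (-t2) (-t3) = -lasicA4 t1 t2 t3 := by
  have hT : -t1 * -t2 * -t3 = -(t1 * t2 * t3) := by ring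
  simp only [lasicA5, lasicA4, hT]
  rw [show (-(t1 * t2 * t3) - 1) ^ 3 = -(1 + t1 * t2 * t3) ^ 3 by ring, div_neg]
  ring

theorem sub_one_ne_zero_and_add_one_ne_zero {T : K} (h : T ^ 2 ≠ 1) :
    T - 1 ≠ 0 ∧ T + 1 ≠ 0 := by
  rw [Ne, sq_eq_one_iff, not_or] at h
  exact ⟨sub_ne_zero.mpr h.1, fun h0 => h.2 (eq_neg_of_add_eq_zero_left h0)⟩

theorem lasicA_mul_lasicA_add_one (t1 t2 t3 : K) (h : (t1 * t2 * t3) ^ 2 ≠ 1) :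
    lasicA t1 t2 t3 * lasicA t2 t3 t1 + 1 =
      (((t1 * t2 * t3) ^ 2 + 2 * t1 * t2 * (1 + t2 * t3) + 1) /
        ((t1 * t2 * t3 - 1) * (t1 * t2 * t3 + 1))) ^ 2 := by
  obtain ⟨h₁, h₂⟩ := sub_one_ne_zero_and_add_one_ne_zero h
  simp only [lasicA, ← mul_rotate t1 t2 t3]
  field_simp
  ring

theorem lasicA_mul_lasicA5_add_one (t1 t2 t3 : K) (h : (t1 * t2 * t3) ^ 2 ≠ 1) :
    lasicA t1 t2 t3 * lasicA5 t1 t2 t3 + 1 =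
      (((t1 * t2 * t3 + 1) ^ 2 +
        2 * t1 * (t1 * t2 * (1 + t3 + t2 * t3) + 1 + t2 + t3 + t2 ^ 2 * t3)) /
        (t1 * t2 * t3 - 1) ^ 2) ^ 2 := by
  obtain ⟨h₁, h₂⟩ := sub_one_ne_zero_and_add_one_ne_zero h
  simp only [lasicA, lasicA5]
  field_simp
  ring

theorem lasicA4_mul_lasicA5_add_one (t1 t2 t3 : K) (h : (t1 * t2 * t3) ^ 2 ≠ 1) :
    lasicA4 t1 t2 t3 * lasicA5 t1 t2 t3 + 1 =
      lasicDisc t1 t2 t3 / ((t1 * t2 * t3) ^ 2 - 1) ^ 2 := by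
  obtain ⟨h₁, h₂⟩ := sub_one_ne_zero_and_add_one_ne_zero h
  rw [← add_comm 1] at h₂
  have hden : (1 + t1 * t2 * t3) ^ 3 * (t1 * t2 * t3 - 1) ^ 3 ≠ 0 := by positivity
  rw [lasicA4, lasicA5, lasicDisc, div_mul_div_comm, div_add_one hden,
    div_eq_div_iff hden (pow_ne_zero 2 (sub_ne_zero.mpr h))]
  ring

theorem isDiophantinePair_lasicA_lasicA (t1 t2 t3 : K) (h : (t1 * t2 * t3) ^ 2 ≠ 1) :
    IsDiophantinePair (lasicA t1 t2 t3) (lasicA t2 t3 t1) :=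
  ⟨_, lasicA_mul_lasicA_add_one t1 t2 t3 h⟩

theorem isDiophantinePair_lasicA_lasicA5 (t1 t2 t3 : K) (h : (t1 * t2 * t3) ^ 2 ≠ 1) :
    IsDiophantinePair (lasicA t1 t2 t3) (lasicA5 t1 t2 t3) :=
  ⟨_, lasicA_mul_lasicA5_add_one t1 t2 t3 h⟩

theorem isDiophantinePair_lasicA_lasicA4 (t1 t2 t3 : K) (h : (t1 * t2 * t3) ^ 2 ≠ 1) :
    IsDiophantinePair (lasicA t1 t2 t3) (lasicA4 t1 t2 t3) := by
  have h' : (-t1 * -t2 * -t3) ^ 2 ≠ 1 := by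
    rwa [show (-t1 * -t2 * -t3) ^ 2 = (t1 * t2 * t3) ^ 2 by ring]
  simpa only [lasicA_neg, lasicA5_neg, isDiophantinePair_neg_neg] using
    isDiophantinePair_lasicA_lasicA5 _ _ _ h'

theorem isDiophantinePair_lasicA4_lasicA5 (t1 t2 t3 : K) (h : (t1 * t2 * t3) ^ 2 ≠ 1)
    (hΔ : IsSquare (lasicDisc t1 t2 t3)) :
    IsDiophantinePair (lasicA4 t1 t2 t3) (lasicA5 t1 t2 t3) := by
  obtain ⟨w, hw⟩ := hΔ
  exact ⟨w / ((t1 * t2 * t3) ^ 2 - 1), by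
    rw [lasicA4_mul_lasicA5_add_one t1 t2 t3 h, hw, div_pow, ← sq]⟩

theorem pairwise_isDiophantinePair_lasic (t1 t2 t3 : K) (h : (t1 * t2 * t3) ^ 2 ≠ 1)
    (h45 : IsDiophantinePair (lasicA4 t1 t2 t3) (lasicA5 t1 t2 t3)) :
    [lasicA t1 t2 t3, lasicA t2 t3 t1, lasicA t3 t1 t2, lasicA4 t1 t2 t3,
      lasicA5 t1 t2 t3].Pairwise IsDiophantinePair := by
  have h' : (t2 * t3 * t1) ^ 2 ≠ 1 := by rwa [← mul_rotate]
  have h'' : (t3 * t1 * t2) ^ 2 ≠ 1 := by rwa [← mul_rotate]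
  simp only [List.pairwise_cons, List.mem_cons, List.not_mem_nil, or_false, forall_eq_or_imp,
    forall_eq, false_imp_iff, implies_true, List.Pairwise.nil, and_true]
  refine ⟨⟨isDiophantinePair_lasicA_lasicA t1 t2 t3 h,
      (isDiophantinePair_lasicA_lasicA t3 t1 t2 h'').symm,
      isDiophantinePair_lasicA_lasicA4 t1 t2 t3 h, isDiophantinePair_lasicA_lasicA5 t1 t2 t3 h⟩,
    ⟨isDiophantinePair_lasicA_lasicA t2 t3 t1 h', ?_, ?_⟩, ⟨?_, ?_⟩, h45⟩
  · rw [← lasicA4_rotate]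
    exact isDiophantinePair_lasicA_lasicA4 t2 t3 t1 h'
  · rw [← lasicA5_rotate]
    exact isDiophantinePair_lasicA_lasicA5 t2 t3 t1 h'
  · rw [lasicA4_rotate t3 t1 t2]
    exact isDiophantinePair_lasicA_lasicA4 t3 t1 t2 h''
  · rw [lasicA5_rotate t3 t1 t2]
    exact isDiophantinePair_lasicA_lasicA5 t3 t1 t2 h''

theorem lasicDisc_eq_sq [CharZero K] (u : K) (hu0 : u ≠ 0) (hu4 : u ≠ 4) (hu4' : u ≠ -4)
    (hu20 : u ≠ -20) (hq : u ^ 2 + 10 * u + 16 ≠ 0) (t1 t2 t3 : K)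
    (ht2 : t2 = (u ^ 2 + 10 * u + 16) / ((u - 4) * (u + 4)))
    (ht3 : t3 = (16 - u ^ 2) / (6 * u))
    (ht1 : t1 = 3 * (3 * u ^ 4 + 40 * u ^ 3 + 368 * u ^ 2 + 1280 * u + 1024) /
      (4 * (u ^ 2 + 10 * u + 16) * (u + 20) * u)) :
    lasicDisc t1 t2 t3 =
      ((u + 8) * (27 * u ^ 9 - 312 * u ^ 8 - 9136 * u ^ 7 - 89728 * u ^ 6 - 417536 * u ^ 5 -
          1132544 * u ^ 4 - 806912 * u ^ 3 + 3178496 * u ^ 2 + 8650752 * u + 6291456) /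
        (192 * u ^ 4 * (u + 20) ^ 2 * ((u - 4) * (u + 4)))) ^ 2 := by
  replace hu4 : u - 4 ≠ 0 := sub_ne_zero.mpr hu4
  replace hu4' : u + 4 ≠ 0 := fun h => hu4' (eq_neg_of_add_eq_zero_left h)
  replace hu20 : u + 20 ≠ 0 := fun h => hu20 (eq_neg_of_add_eq_zero_left h)
  -- the form in which `field_simp` meets this denominator
  replace hq : u * (u + 10) + 16 ≠ 0 := by
    rwa [← show u ^ 2 + 10 * u + 16 = u * (u + 10) + 16 by ring]
  subst ht1 ht2 ht3
  rw [lasicDisc]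
  field_simp
  ring

end Lasic

theorem stmt_12_general (u : ℚ) (hu0 : u ≠ 0) (hu4 : u ≠ 4) (hu4' : u ≠ -4)
    (hu20 : u ≠ -20)
    (t1 t2 t3 : ℚ)
    (ht2 : t2 = (u ^ 2 + 10 * u + 16) / ((u - 4) * (u + 4)))
    (ht3 : t3 = (16 - u ^ 2) / (6 * u))
    (ht1 : t1 = 3 * (3 * u ^ 4 + 40 * u ^ 3 + 368 * u ^ 2 + 1280 * u + 1024) /
      (4 * (u ^ 2 + 10 * u + 16) * (u + 20) * u))
    (hq : u ^ 2 + 10 * u + 16 ≠ 0)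
    (hden : (t1 * t2 * t3) ^ 2 ≠ 1)
    (a1 a2 a3 a4 a5 : ℚ)
    (ha1 : a1 = 2 * t1 * (1 + t1 * t2 * (1 + t2 * t3)) /
      ((t1 * t2 * t3 - 1) * (t1 * t2 * t3 + 1)))
    (ha2 : a2 = 2 * t2 * (1 + t2 * t3 * (1 + t3 * t1)) /
      ((t1 * t2 * t3 - 1) * (t1 * t2 * t3 + 1)))
    (ha3 : a3 = 2 * t3 * (1 + t3 * t1 * (1 + t1 * t2)) /
      ((t1 * t2 * t3 - 1) * (t1 * t2 * t3 + 1)))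
    (ha4 : a4 = -2 * (1 - t3 + t2 * t3) * (t3 * t1 + 1 - t1) * (-t2 + 1 + t1 * t2) *
      (t1 * t2 * t3 - 1) / (1 + t1 * t2 * t3) ^ 3)
    (ha5 : a5 = 2 * (t3 + t2 * t3 + 1) * (t3 * t1 + t1 + 1) * (1 + t2 + t1 * t2) *
      (1 + t1 * t2 * t3) / (t1 * t2 * t3 - 1) ^ 3) :
    (∃ q : ℚ, a4 * a5 + 1 = q ^ 2) ∧
    ∀ x ∈ [a1, a2, a3, a4, a5], ∀ y ∈ [a1, a2, a3, a4, a5],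
      x ≠ y → ∃ q : ℚ, x * y + 1 = q ^ 2 := by
  have h45 : IsDiophantinePair (lasicA4 t1 t2 t3) (lasicA5 t1 t2 t3) :=
    isDiophantinePair_lasicA4_lasicA5 t1 t2 t3 hden
      ⟨_, (lasicDisc_eq_sq u hu0 hu4 hu4' hu20 hq t1 t2 t3 ht2 ht3 ht1).trans (sq _)⟩
  have e1 : a1 = lasicA t1 t2 t3 := ha1
  have e2 : a2 = lasicA t2 t3 t1 := by rw [ha2, lasicA, ← mul_rotate t1 t2 t3]
  have e3 : a3 = lasicA t3 t1 t2 := by rw [ha3, lasicA, mul_rotate t3 t1 t2]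
  have e4 : a4 = lasicA4 t1 t2 t3 := ha4
  have e5 : a5 = lasicA5 t1 t2 t3 := ha5
  rw [e1, e2, e3, e4, e5]
  exact ⟨h45, (pairwise_isDiophantinePair_lasic t1 t2 t3 hden h45).forall⟩

/-- The two-parameter family restricted by the choice of t1 yields rational
Diophantine quintuples. -/
theorem stmt_12 (u : ℚ) (hu0 : u ≠ 0) (hu4 : u ≠ 4) (hu4' : u ≠ -4)
    (hu2 : u ≠ -2) (hu8 : u ≠ -8) (hu20 : u ≠ -20)
    (t1 t2 t3 : ℚ)
    (ht2 : t2 = (u ^ 2 + 10 * u + 16) / ((u - 4) * (u + 4)))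
    (ht3 : t3 = (16 - u ^ 2) / (6 * u))
    (ht1 : t1 = 3 * (3 * u ^ 4 + 40 * u ^ 3 + 368 * u ^ 2 + 1280 * u + 1024) /
      (4 * (u ^ 2 + 10 * u + 16) * (u + 20) * u))
    (hq : u ^ 2 + 10 * u + 16 ≠ 0)
    (hden : (t1 * t2 * t3) ^ 2 ≠ 1)
    (a1 a2 a3 a4 a5 : ℚ)
    (ha1 : a1 = 2 * t1 * (1 + t1 * t2 * (1 + t2 * t3)) /
      ((t1 * t2 * t3 - 1) * (t1 * t2 * t3 + 1)))
    (ha2 : a2 = 2 * t2 * (1 + t2 * t3 * (1 + t3 * t1)) /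
      ((t1 * t2 * t3 - 1) * (t1 * t2 * t3 + 1)))
    (ha3 : a3 = 2 * t3 * (1 + t3 * t1 * (1 + t1 * t2)) /
      ((t1 * t2 * t3 - 1) * (t1 * t2 * t3 + 1)))
    (ha4 : a4 = -2 * (1 - t3 + t2 * t3) * (t3 * t1 + 1 - t1) * (-t2 + 1 + t1 * t2) *
      (t1 * t2 * t3 - 1) / (1 + t1 * t2 * t3) ^ 3)
    (ha5 : a5 = 2 * (t3 + t2 * t3 + 1) * (t3 * t1 + t1 + 1) * (1 + t2 + t1 * t2) *
      (1 + t1 * t2 * t3) / (t1 * t2 * t3 - 1) ^ 3) :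
    (∃ q : ℚ, a4 * a5 + 1 = q ^ 2) ∧
    ∀ x ∈ [a1, a2, a3, a4, a5], ∀ y ∈ [a1, a2, a3, a4, a5],
      x ≠ y → ∃ q : ℚ, x * y + 1 = q ^ 2 :=
  stmt_12_general u hu0 hu4 hu4' hu20 t1 t2 t3 ht2 ht3 ht1 hq hden a1 a2 a3 a4 a5 ha1 ha2 ha3 ha4
    ha5
end

section
/- For every rational u with u ≠ 0, ±4, -2, -8 and such that all relevant denominators are nonzero, setting t2 = (u^2+10u+16)/((u-4)(u+4)) and t3 = (16-u^2)/(6u), the value of the quartic polynomial p(t1, t2, t3) (the expression whose being a square is equivalent to a4a5 + 1 being a square) is a perfect rational square for every rational t1. -/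
/-- The quartic polynomial p(t1,t2,t3) from the paper. -/
def pQuartic (t1 t2 t3 : ℚ) : ℚ :=
  (-8*t2^3*t3^3 - 8*t3^2*t2^2 - 3*t3^4*t2^4 + 4*t2^2 + 4*t2^2*t3^4 + 4*t2^4*t3^2
      + 8*t2^3*t3) * t1^4
  + (8*t2^2*t3 - 16*t2*t3^2 - 8*t2^3*t3^2 + 8*t2 - 8*t2^3*t3^4 - 8*t2^4*t3^3
      - 8*t2^2*t3^3 + 8*t3^4*t2) * t1^3
  + (-8*t3^2 - 8*t2^2 - 8*t2*t3 - 8*t2^3*t3^3 - 8*t2^2*t3^4 + 8*t3^3*t2 + 4*t3^4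
      + 4 - 18*t3^2*t2^2 + 4*t3^4*t2^4 - 8*t2^4*t3^2 - 16*t2^3*t3) * t1^2
  + (8*t2^4*t3^3 - 8*t2^2*t3 - 16*t2^2*t3^3 - 8*t2*t3^2 - 8*t2 + 8*t3^3
      + 8*t2^3*t3^2 - 8*t3) * t1
  - 3 - 8*t2*t3 + 4*t2^4*t3^2 - 8*t3^2*t2^2 + 4*t3^2 + 4*t2^2 + 8*t2^3*t3

set_option maxHeartbeats 4000000 in
/-- Under the substitution t2 = (u²+10u+16)/((u-4)(u+4)), t3 = (16-u²)/(6u),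
the quartic p(t1,t2,t3) is a rational square for every rational t1. -/
theorem stmt_13 (u : ℚ) (hu0 : u ≠ 0) (hu4 : u ≠ 4) (hu4' : u ≠ -4)
    (hu2 : u ≠ -2) (hu8 : u ≠ -8)
    (t2 t3 : ℚ)
    (ht2 : t2 = (u ^ 2 + 10 * u + 16) / ((u - 4) * (u + 4)))
    (ht3 : t3 = (16 - u ^ 2) / (6 * u)) :
    ∀ t1 : ℚ, ∃ q : ℚ, pQuartic t1 t2 t3 = q ^ 2 := by
  intro t1
  have h4 : u - 4 ≠ 0 := sub_ne_zero.mpr hu4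
  have h4' : u + 4 ≠ 0 := by intro h; exact hu4' (by linarith)
  have hd1 : (u - 4) * (u + 4) ≠ 0 := mul_ne_zero h4 h4'
  have hd2 : (6 : ℚ) * u ≠ 0 := mul_ne_zero (by norm_num) hu0
  have e1 : t2 * ((u - 4) * (u + 4)) = u ^ 2 + 10 * u + 16 := by
    rw [ht2]; exact div_mul_cancel₀ _ hd1
  have e2 : t3 * (6 * u) = 16 - u ^ 2 := by
    rw [ht3]; exact div_mul_cancel₀ _ hd2
  refine ⟨(-(u^6 + 4*u^5 - 172*u^4 - 1472*u^3 - 2752*u^2 + 1024*u + 4096)*t1^2 + 32*u*(u^2+10*u+16)*((u-4)*(u+4))*t1 - 12*u^2*(13*u^2+112*u+208)) / (36 * u ^ 2 * ((u - 4) * (u + 4))), ?_⟩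
  have hD : ((u - 4) * (u + 4)) ^ 4 * (6 * u) ^ 4 ≠ 0 :=
    mul_ne_zero (pow_ne_zero _ hd1) (pow_ne_zero _ hd2)
  have key : pQuartic t1 t2 t3 * (((u - 4) * (u + 4)) ^ 4 * (6 * u) ^ 4)
      = (-(u^6 + 4*u^5 - 172*u^4 - 1472*u^3 - 2752*u^2 + 1024*u + 4096)*t1^2 + 32*u*(u^2+10*u+16)*((u-4)*(u+4))*t1 - 12*u^2*(13*u^2+112*u+208)) ^ 2 * ((u - 4) * (u + 4)) ^ 2 := by
    unfold pQuartic
    linear_combination ((21233664)*u^4 + (-21233664)*u^4*t3^2 + (-21233664)*u^4*t2 + (42467328)*u^4*t2*t3 + (21233664)*u^4*t2*t3^2 + (-42467328)*u^4*t2^2*t3 + (21233664)*u^4*t2^2*t3^2 + (-21233664)*u^4*t2^3*t3^2 + (42467328)*u^4*t1 + (-42467328)*u^4*t1*t3 + (-42467328)*u^4*t1*t3^3 + (42467328)*u^4*t1*t2*t3 + (42467328)*u^4*t1*t2*t3^2 + (42467328)*u^4*t1*t2*t3^3 + (-42467328)*u^4*t1*t2^2*t3^2 + (42467328)*u^4*t1*t2^2*t3^3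 + (-42467328)*u^4*t1*t2^3*t3^3 + (-42467328)*u^4*t1^2 + (127401984)*u^4*t1^2*t3 + (-138018816)*u^4*t1^2*t3^2 + (-21233664)*u^4*t1^2*t3^4 + (42467328)*u^4*t1^2*t2 + (-84934656)*u^4*t1^2*t2*t3 + (138018816)*u^4*t1^2*t2*t3^2 + (-42467328)*u^4*t1^2*t2*t3^3 + (21233664)*u^4*t1^2*t2*t3^4 + (84934656)*u^4*t1^2*t2^2*t3 + (-42467328)*u^4*t1^2*t2^2*t3^2 + (42467328)*u^4*t1^2*t2^2*t3^3 + (21233664)*u^4*t1^2*t2^2*t3^4 + (42467328)*u^4*t1^2*t2^3*t3^2 + (-21233664)*u^4*t1^2*t2^3*t3^4 + (-42467328)*u^4*t1^3 + (42467328)*u^4*t1^3*t3 + (127401984)*u^4*t1^3*t3^2 + (-84934656)*u^4*t1^3*t3^3 + (-42467328)*u^4*t1^3*t2*t3 + (-42467328)*u^4*t1^3*t2*t3^2 + (84934656)*u^4*t1^3*t2*t3^3 + (-42467328)*u^4*t1^3*t2*t3^4 + (42467328)*u^4*t1^3*t2^2*t3^2 + (-42467328)*u^4*t1^3*t2^2*t3^3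 + (42467328)*u^4*t1^3*t2^2*t3^4 + (42467328)*u^4*t1^3*t2^3*t3^3 + (21233664)*u^4*t1^4 + (-42467328)*u^4*t1^4*t3 + (-21233664)*u^4*t1^4*t3^2 + (42467328)*u^4*t1^4*t3^3 + (5308416)*u^4*t1^4*t3^4 + (-21233664)*u^4*t1^4*t2 + (42467328)*u^4*t1^4*t2*t3 + (21233664)*u^4*t1^4*t2*t3^2 + (-42467328)*u^4*t1^4*t2*t3^3 + (-5308416)*u^4*t1^4*t2*t3^4 + (-42467328)*u^4*t1^4*t2^2*t3 + (21233664)*u^4*t1^4*t2^2*t3^2 + (42467328)*u^4*t1^4*t2^2*t3^3 + (-15925248)*u^4*t1^4*t2^2*t3^4 + (-21233664)*u^4*t1^4*t2^3*t3^2 + (15925248)*u^4*t1^4*t2^3*t3^4 + (13271040)*u^5 + (-53084160)*u^5*t3 + (13271040)*u^5*t3^2 + (26542080)*u^5*t2*t3 + (-26542080)*u^5*t2*t3^2 + (13271040)*u^5*t2^2*t3^2 + (-26542080)*u^5*t1*t3 + (-53084160)*u^5*t1*t3^2 + (26542080)*u^5*t1*t3^3 + (26542080)*u^5*t1*t2*t3^2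 + (-53084160)*u^5*t1*t2*t3^3 + (26542080)*u^5*t1*t2^2*t3^3 + (-26542080)*u^5*t1^2 + (106168320)*u^5*t1^2*t3 + (-139345920)*u^5*t1^2*t3^2 + (53084160)*u^5*t1^2*t3^3 + (13271040)*u^5*t1^2*t3^4 + (-53084160)*u^5*t1^2*t2*t3 + (53084160)*u^5*t1^2*t2*t3^2 + (-26542080)*u^5*t1^2*t2*t3^3 + (-26542080)*u^5*t1^2*t2*t3^4 + (-26542080)*u^5*t1^2*t2^2*t3^2 + (13271040)*u^5*t1^2*t2^2*t3^4 + (26542080)*u^5*t1^3*t3 + (53084160)*u^5*t1^3*t3^2 + (-106168320)*u^5*t1^3*t3^3 + (53084160)*u^5*t1^3*t3^4 + (-26542080)*u^5*t1^3*t2*t3^2 + (53084160)*u^5*t1^3*t2*t3^3 + (-26542080)*u^5*t1^3*t2*t3^4 + (-26542080)*u^5*t1^3*t2^2*t3^3 + (13271040)*u^5*t1^4 + (-53084160)*u^5*t1^4*t3 + (13271040)*u^5*t1^4*t3^2 + (53084160)*u^5*t1^4*t3^3 + (-16588800)*u^5*t1^4*t3^4 + (26542080)*u^5*t1^4*t2*t3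 + (-26542080)*u^5*t1^4*t2*t3^2 + (-26542080)*u^5*t1^4*t2*t3^3 + (19906560)*u^5*t1^4*t2*t3^4 + (13271040)*u^5*t1^4*t2^2*t3^2 + (-9953280)*u^5*t1^4*t2^2*t3^4 + (-1327104)*u^6 + (-27205632)*u^6*t3 + (31518720)*u^6*t3^2 + (3981312)*u^6*t2 + (-2654208)*u^6*t2*t3 + (-17584128)*u^6*t2*t3^2 + (7962624)*u^6*t2^2*t3 + (-1327104)*u^6*t2^2*t3^2 + (3981312)*u^6*t2^3*t3^2 + (-7962624)*u^6*t1 + (2654208)*u^6*t1*t3 + (-27205632)*u^6*t1*t3^2 + (63037440)*u^6*t1*t3^3 + (-7962624)*u^6*t1*t2*t3 + (-2654208)*u^6*t1*t2*t3^2 + (-35168256)*u^6*t1*t2*t3^3 + (7962624)*u^6*t1*t2^2*t3^2 + (-2654208)*u^6*t1*t2^2*t3^3 + (7962624)*u^6*t1*t2^3*t3^3 + (2654208)*u^6*t1^2 + (30523392)*u^6*t1^2*t3 + (-51757056)*u^6*t1^2*t3^2 + (27205632)*u^6*t1^2*t3^3 + (31518720)*u^6*t1^2*t3^4 + (-7962624)*u^6*t1^2*t2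 + (5308416)*u^6*t1^2*t2*t3 + (1327104)*u^6*t1^2*t2*t3^2 + (2654208)*u^6*t1^2*t2*t3^3 + (-17584128)*u^6*t1^2*t2*t3^4 + (-15925248)*u^6*t1^2*t2^2*t3 + (2654208)*u^6*t1^2*t2^2*t3^2 + (-7962624)*u^6*t1^2*t2^2*t3^3 + (-1327104)*u^6*t1^2*t2^2*t3^4 + (-7962624)*u^6*t1^2*t2^3*t3^2 + (3981312)*u^6*t1^2*t2^3*t3^4 + (7962624)*u^6*t1^3 + (-2654208)*u^6*t1^3*t3 + (3317760)*u^6*t1^3*t3^2 + (-55074816)*u^6*t1^3*t3^3 + (27205632)*u^6*t1^3*t3^4 + (7962624)*u^6*t1^3*t2*t3 + (2654208)*u^6*t1^3*t2*t3^2 + (11280384)*u^6*t1^3*t2*t3^3 + (2654208)*u^6*t1^3*t2*t3^4 + (-7962624)*u^6*t1^3*t2^2*t3^2 + (2654208)*u^6*t1^3*t2^2*t3^3 + (-7962624)*u^6*t1^3*t2^2*t3^4 + (-7962624)*u^6*t1^3*t2^3*t3^3 + (-1327104)*u^6*t1^4 + (-19243008)*u^6*t1^4*t3 + (31518720)*u^6*t1^4*t3^2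 + (19243008)*u^6*t1^4*t3^3 + (-22975488)*u^6*t1^4*t3^4 + (3981312)*u^6*t1^4*t2 + (-2654208)*u^6*t1^4*t2*t3 + (-17584128)*u^6*t1^4*t2*t3^2 + (2654208)*u^6*t1^4*t2*t3^3 + (11197440)*u^6*t1^4*t2*t3^4 + (7962624)*u^6*t1^4*t2^2*t3 + (-1327104)*u^6*t1^4*t2^2*t3^2 + (-7962624)*u^6*t1^4*t2^2*t3^3 + (995328)*u^6*t1^4*t2^2*t3^4 + (3981312)*u^6*t1^4*t2^3*t3^2 + (-2985984)*u^6*t1^4*t2^3*t3^4 + (-1658880)*u^7 + (13478400)*u^7*t3^2 + (-3317760)*u^7*t2*t3 + (-1658880)*u^7*t2^2*t3^2 + (3317760)*u^7*t1*t3 + (26956800)*u^7*t1*t3^3 + (-3317760)*u^7*t1*t2*t3^2 + (-3317760)*u^7*t1*t2^2*t3^3 + (3317760)*u^7*t1^2 + (-12856320)*u^7*t1^2*t3^2 + (13478400)*u^7*t1^2*t3^4 + (6635520)*u^7*t1^2*t2*t3 + (3317760)*u^7*t1^2*t2*t3^3 + (3317760)*u^7*t1^2*t2^2*t3^2 + (-1658880)*u^7*t1^2*t2^2*t3^4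 + (-3317760)*u^7*t1^3*t3 + (-17003520)*u^7*t1^3*t3^3 + (3317760)*u^7*t1^3*t2*t3^2 + (3317760)*u^7*t1^3*t2*t3^4 + (3317760)*u^7*t1^3*t2^2*t3^3 + (-1658880)*u^7*t1^4 + (13478400)*u^7*t1^4*t3^2 + (-9279360)*u^7*t1^4*t3^4 + (-3317760)*u^7*t1^4*t2*t3 + (3317760)*u^7*t1^4*t2*t3^3 + (-1658880)*u^7*t1^4*t2^2*t3^2 + (1244160)*u^7*t1^4*t2^2*t3^4 + (-82944)*u^8 + (1700352)*u^8*t3 + (1969920)*u^8*t3^2 + (-248832)*u^8*t2 + (-165888)*u^8*t2*t3 + (1099008)*u^8*t2*t3^2 + (-497664)*u^8*t2^2*t3 + (-82944)*u^8*t2^2*t3^2 + (-248832)*u^8*t2^3*t3^2 + (497664)*u^8*t1 + (165888)*u^8*t1*t3 + (1700352)*u^8*t1*t3^2 + (3939840)*u^8*t1*t3^3 + (497664)*u^8*t1*t2*t3 + (-165888)*u^8*t1*t2*t3^2 + (2198016)*u^8*t1*t2*t3^3 + (-497664)*u^8*t1*t2^2*t3^2 + (-165888)*u^8*t1*t2^2*t3^3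 + (-497664)*u^8*t1*t2^3*t3^3 + (165888)*u^8*t1^2 + (-1907712)*u^8*t1^2*t3 + (-3234816)*u^8*t1^2*t3^2 + (-1700352)*u^8*t1^2*t3^3 + (1969920)*u^8*t1^2*t3^4 + (497664)*u^8*t1^2*t2 + (331776)*u^8*t1^2*t2*t3 + (-82944)*u^8*t1^2*t2*t3^2 + (165888)*u^8*t1^2*t2*t3^3 + (1099008)*u^8*t1^2*t2*t3^4 + (995328)*u^8*t1^2*t2^2*t3 + (165888)*u^8*t1^2*t2^2*t3^2 + (497664)*u^8*t1^2*t2^2*t3^3 + (-82944)*u^8*t1^2*t2^2*t3^4 + (497664)*u^8*t1^2*t2^3*t3^2 + (-248832)*u^8*t1^2*t2^3*t3^4 + (-497664)*u^8*t1^3 + (-165888)*u^8*t1^3*t3 + (-207360)*u^8*t1^3*t3^2 + (-3442176)*u^8*t1^3*t3^3 + (-1700352)*u^8*t1^3*t3^4 + (-497664)*u^8*t1^3*t2*t3 + (165888)*u^8*t1^3*t2*t3^2 + (-705024)*u^8*t1^3*t2*t3^3 + (165888)*u^8*t1^3*t2*t3^4 + (497664)*u^8*t1^3*t2^2*t3^2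 + (165888)*u^8*t1^3*t2^2*t3^3 + (497664)*u^8*t1^3*t2^2*t3^4 + (497664)*u^8*t1^3*t2^3*t3^3 + (-82944)*u^8*t1^4 + (1202688)*u^8*t1^4*t3 + (1969920)*u^8*t1^4*t3^2 + (-1202688)*u^8*t1^4*t3^3 + (-1435968)*u^8*t1^4*t3^4 + (-248832)*u^8*t1^4*t2 + (-165888)*u^8*t1^4*t2*t3 + (1099008)*u^8*t1^4*t2*t3^2 + (165888)*u^8*t1^4*t2*t3^3 + (-699840)*u^8*t1^4*t2*t3^4 + (-497664)*u^8*t1^4*t2^2*t3 + (-82944)*u^8*t1^4*t2^2*t3^2 + (497664)*u^8*t1^4*t2^2*t3^3 + (62208)*u^8*t1^4*t2^2*t3^4 + (-248832)*u^8*t1^4*t2^3*t3^2 + (186624)*u^8*t1^4*t2^3*t3^4 + (51840)*u^9 + (207360)*u^9*t3 + (51840)*u^9*t3^2 + (103680)*u^9*t2*t3 + (103680)*u^9*t2*t3^2 + (51840)*u^9*t2^2*t3^2 + (-103680)*u^9*t1*t3 + (207360)*u^9*t1*t3^2 + (103680)*u^9*t1*t3^3 + (103680)*u^9*t1*t2*t3^2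 + (207360)*u^9*t1*t2*t3^3 + (103680)*u^9*t1*t2^2*t3^3 + (-103680)*u^9*t1^2 + (-414720)*u^9*t1^2*t3 + (-544320)*u^9*t1^2*t3^2 + (-207360)*u^9*t1^2*t3^3 + (51840)*u^9*t1^2*t3^4 + (-207360)*u^9*t1^2*t2*t3 + (-207360)*u^9*t1^2*t2*t3^2 + (-103680)*u^9*t1^2*t2*t3^3 + (103680)*u^9*t1^2*t2*t3^4 + (-103680)*u^9*t1^2*t2^2*t3^2 + (51840)*u^9*t1^2*t2^2*t3^4 + (103680)*u^9*t1^3*t3 + (-207360)*u^9*t1^3*t3^2 + (-414720)*u^9*t1^3*t3^3 + (-207360)*u^9*t1^3*t3^4 + (-103680)*u^9*t1^3*t2*t3^2 + (-207360)*u^9*t1^3*t2*t3^3 + (-103680)*u^9*t1^3*t2*t3^4 + (-103680)*u^9*t1^3*t2^2*t3^3 + (51840)*u^9*t1^4 + (207360)*u^9*t1^4*t3 + (51840)*u^9*t1^4*t3^2 + (-207360)*u^9*t1^4*t3^3 + (-64800)*u^9*t1^4*t3^4 + (103680)*u^9*t1^4*t2*t3 + (103680)*u^9*t1^4*t2*t3^2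 + (-103680)*u^9*t1^4*t2*t3^3 + (-77760)*u^9*t1^4*t2*t3^4 + (51840)*u^9*t1^4*t2^2*t3^2 + (-38880)*u^9*t1^4*t2^2*t3^4 + (5184)*u^10 + (-5184)*u^10*t3^2 + (5184)*u^10*t2 + (10368)*u^10*t2*t3 + (-5184)*u^10*t2*t3^2 + (10368)*u^10*t2^2*t3 + (5184)*u^10*t2^2*t3^2 + (5184)*u^10*t2^3*t3^2 + (-10368)*u^10*t1 + (-10368)*u^10*t1*t3 + (-10368)*u^10*t1*t3^3 + (-10368)*u^10*t1*t2*t3 + (10368)*u^10*t1*t2*t3^2 + (-10368)*u^10*t1*t2*t3^3 + (10368)*u^10*t1*t2^2*t3^2 + (10368)*u^10*t1*t2^2*t3^3 + (10368)*u^10*t1*t2^3*t3^3 + (-10368)*u^10*t1^2 + (-31104)*u^10*t1^2*t3 + (-33696)*u^10*t1^2*t3^2 + (-5184)*u^10*t1^2*t3^4 + (-10368)*u^10*t1^2*t2 + (-20736)*u^10*t1^2*t2*t3 + (-33696)*u^10*t1^2*t2*t3^2 + (-10368)*u^10*t1^2*t2*t3^3 + (-5184)*u^10*t1^2*t2*t3^4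 + (-20736)*u^10*t1^2*t2^2*t3 + (-10368)*u^10*t1^2*t2^2*t3^2 + (-10368)*u^10*t1^2*t2^2*t3^3 + (5184)*u^10*t1^2*t2^2*t3^4 + (-10368)*u^10*t1^2*t2^3*t3^2 + (5184)*u^10*t1^2*t2^3*t3^4 + (10368)*u^10*t1^3 + (10368)*u^10*t1^3*t3 + (-31104)*u^10*t1^3*t3^2 + (-20736)*u^10*t1^3*t3^3 + (10368)*u^10*t1^3*t2*t3 + (-10368)*u^10*t1^3*t2*t3^2 + (-20736)*u^10*t1^3*t2*t3^3 + (-10368)*u^10*t1^3*t2*t3^4 + (-10368)*u^10*t1^3*t2^2*t3^2 + (-10368)*u^10*t1^3*t2^2*t3^3 + (-10368)*u^10*t1^3*t2^2*t3^4 + (-10368)*u^10*t1^3*t2^3*t3^3 + (5184)*u^10*t1^4 + (10368)*u^10*t1^4*t3 + (-5184)*u^10*t1^4*t3^2 + (-10368)*u^10*t1^4*t3^3 + (1296)*u^10*t1^4*t3^4 + (5184)*u^10*t1^4*t2 + (10368)*u^10*t1^4*t2*t3 + (-5184)*u^10*t1^4*t2*t3^2 + (-10368)*u^10*t1^4*t2*t3^3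 + (1296)*u^10*t1^4*t2*t3^4 + (10368)*u^10*t1^4*t2^2*t3 + (5184)*u^10*t1^4*t2^2*t3^2 + (-10368)*u^10*t1^4*t2^2*t3^3 + (-3888)*u^10*t1^4*t2^2*t3^4 + (5184)*u^10*t1^4*t2^3*t3^2 + (-3888)*u^10*t1^4*t2^3*t3^4) * e1 + ((268435456)*t1^4 + (1073741824)*u*t1^3 + (134217728)*u*t1^4 + (100663296)*u*t1^4*t3 + (1400897536)*u^2*t1^2 + (939524096)*u^2*t1^3 + (402653184)*u^2*t1^3*t3 + (-360710144)*u^2*t1^4 + (50331648)*u^2*t1^4*t3 + (37748736)*u^2*t1^4*t3^2 + (654311424)*u^3*t1 + (1600126976)*u^3*t1^2 + (525336576)*u^3*t1^2*t3 + (-620756992)*u^3*t1^3 + (352321536)*u^3*t1^3*t3 + (150994944)*u^3*t1^3*t3^2 + (-291504128)*u^3*t1^4 + (-128974848)*u^3*t1^4*t3 + (18874368)*u^3*t1^4*t3^2 + (14155776)*u^3*t1^4*t3^3 + (94371840)*u^4 + (718798848)*u^4*t1 + (330301440)*u^4*t1*t3 + (197787648)*u^4*t1^2 + (472645632)*u^4*t1^2*t3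 + (377487360)*u^4*t1^2*t3^2 + (-894959616)*u^4*t1^3 + (-250085376)*u^4*t1^3*t3 + (4718592)*u^4*t1^3*t3^2 + (141557760)*u^4*t1^3*t3^3 + (50659328)*u^4*t1^4 + (-63700992)*u^4*t1^4*t3 + (-24772608)*u^4*t1^4*t3^2 + (-35389440)*u^4*t1^4*t3^3 + (80805888)*u^5 + (88473600)*u^5*t3 + (193658880)*u^5*t1 + (322633728)*u^5*t1*t3 + (176947200)*u^5*t1*t3^2 + (-361627648)*u^5*t1^2 + (-78790656)*u^5*t1^2*t3 + (402849792)*u^5*t1^2*t3^2 + (88473600)*u^5*t1^2*t3^3 + (-239796224)*u^5*t1^3 + (-366673920)*u^5*t1^3*t3 + (-217055232)*u^5*t1^3*t3^2 + (161021952)*u^5*t1^3*t3^3 + (115671040)*u^5*t1^4 + (90562560)*u^5*t1^4*t3 + (-22708224)*u^5*t1^4*t3^2 + (-88031232)*u^5*t1^4*t3^3 + (22523904)*u^6 + (90685440)*u^6*t3 + (-44924928)*u^6*t1 + (99237888)*u^6*t1*t3 + (181370880)*u^6*t1*t3^2 + (-144883712)*u^6*t1^2 + (-210911232)*u^6*t1^2*t3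 + (130904064)*u^6*t1^2*t3^2 + (90685440)*u^6*t1^2*t3^3 + (52264960)*u^6*t1^3 + (-122142720)*u^6*t1^3*t3 + (-181665792)*u^6*t1^3*t3^2 + (54190080)*u^6*t1^3*t3^3 + (37306368)*u^6*t1^4 + (94470144)*u^6*t1^4*t3 + (-6073344)*u^6*t1^4*t3^2 + (-65802240)*u^6*t1^4*t3^3 + (34297344)*u^7*t3 + (-29319168)*u^7*t1 + (68594688)*u^7*t1*t3^2 + (-84968448)*u^7*t1^2*t3 + (34297344)*u^7*t1^2*t3^3 + (34299904)*u^7*t1^3 + (-64760832)*u^7*t1^3*t3^2 + (34994688)*u^7*t1^4*t3 + (-23124096)*u^7*t1^4*t3^3 + (-1407744)*u^8 + (5667840)*u^8*t3 + (-2807808)*u^8*t1 + (-6202368)*u^8*t1*t3 + (11335680)*u^8*t1*t3^2 + (9055232)*u^8*t1^2 + (-13181952)*u^8*t1^2*t3 + (-8181504)*u^8*t1^2*t3^2 + (5667840)*u^8*t1^2*t3^3 + (3266560)*u^8*t1^3 + (7633920)*u^8*t1^3*t3 + (-11354112)*u^8*t1^3*t3^2 + (-3386880)*u^8*t1^3*t3^3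 + (-2331648)*u^8*t1^4 + (5904384)*u^8*t1^4*t3 + (379584)*u^8*t1^4*t3^2 + (-4112640)*u^8*t1^4*t3^3 + (-315648)*u^9 + (345600)*u^9*t3 + (756480)*u^9*t1 + (-1260288)*u^9*t1*t3 + (691200)*u^9*t1*t3^2 + (1412608)*u^9*t1^2 + (-307776)*u^9*t1^2*t3 + (-1573632)*u^9*t1^2*t3^2 + (345600)*u^9*t1^2*t3^3 + (-936704)*u^9*t1^3 + (1432320)*u^9*t1^3*t3 + (-847872)*u^9*t1^3*t3^2 + (-628992)*u^9*t1^3*t3^3 + (-451840)*u^9*t1^4 + (353760)*u^9*t1^4*t3 + (88704)*u^9*t1^4*t3^2 + (-343872)*u^9*t1^4*t3^3 + (-23040)*u^10 + (175488)*u^10*t1 + (-80640)*u^10*t1*t3 + (-48288)*u^10*t1^2 + (115392)*u^10*t1^2*t3 + (-92160)*u^10*t1^2*t3^2 + (-218496)*u^10*t1^3 + (61056)*u^10*t1^3*t3 + (1152)*u^10*t1^3*t3^2 + (-34560)*u^10*t1^3*t3^3 + (-12368)*u^10*t1^4 + (-15552)*u^10*t1^4*t3 + (6048)*u^10*t1^4*t3^2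 + (-8640)*u^10*t1^4*t3^3 + (9984)*u^11*t1 + (-24416)*u^11*t1^2 + (8016)*u^11*t1^2*t3 + (-9472)*u^11*t1^3 + (-5376)*u^11*t1^3*t3 + (2304)*u^11*t1^3*t3^2 + (4448)*u^11*t1^4 + (-1968)*u^11*t1^4*t3 + (-288)*u^11*t1^4*t3^2 + (216)*u^11*t1^4*t3^3 + (-1336)*u^12*t1^2 + (896)*u^12*t1^3 + (-384)*u^12*t1^3*t3 + (344)*u^12*t1^4 + (48)*u^12*t1^4*t3 + (-36)*u^12*t1^4*t3^2 + (64)*u^13*t1^3 + (-8)*u^13*t1^4 + (6)*u^13*t1^4*t3 + (-1)*u^14*t1^4) * e2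
  have hq : pQuartic t1 t2 t3
      = (-(u^6 + 4*u^5 - 172*u^4 - 1472*u^3 - 2752*u^2 + 1024*u + 4096)*t1^2 + 32*u*(u^2+10*u+16)*((u-4)*(u+4))*t1 - 12*u^2*(13*u^2+112*u+208)) ^ 2 * ((u - 4) * (u + 4)) ^ 2 / (((u - 4) * (u + 4)) ^ 4 * (6 * u) ^ 4) :=
    (eq_div_iff hD).mpr key
  rw [hq, div_pow]
  rw [div_eq_div_iff hD (by positivity)]
  ring
end

section
/- There exist infinitely many rational Diophantine sextuples, i.e., infinitely many sets of six distinct nonzero rational numbers such that the product of any two distinct elements plus 1 is a rational square. -/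
/-!
If `{a, b, c, d}` is a rational Diophantine quadruple with `abcd ≠ 1` and `r_xy² = xy + 1`, then
both numbers
`e± = ((a + b + c + d)(abcd + 1) + 2(abc + abd + acd + bcd) ± 2 r_ab r_ac r_ad r_bc r_bd r_cd)`
`     / (abcd - 1)²`
extend it to a Diophantine quintuple (Dujella's regular extensions), so `{a, b, c, d, e₋, e₊}` is a
Diophantine sextuple as soon as `e₋ e₊ + 1` is a square. We exhibit a quadruple of rational
functions of `t` for which `e₋ e₊ + 1` is the square of a rational function. For all but finitely
many `t ∈ ℚ` the six values are then defined, nonzero and pairwise distinct, and since the first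
entry is a nonconstant rational function of `t`, each sextuple arises from only finitely many `t`.
-/
open Polynomial Filter Function Finset

section RegularExtension

variable {K : Type*} [Field K]

def regularExtension (a b c d p : K) : K :=
  ((a + b + c + d) * (a * b * c * d + 1) + 2 * (a * b * c + a * b * d + a * c * d + b * c * d) +
    2 * p) / (a * b * c * d - 1) ^ 2

variable {a b c d p rab rac rad rbc rbd rcd : K}

theorem regularExtension_swap_ab : regularExtension a b c d p = regularExtension b a c d p := by
  unfold regularExtension
  ring_nf

theorem regularExtension_swap_ac : regularExtension a b c d p = regularExtension c b a d p := by
  unfold regularExtension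
  ring_nf

theorem regularExtension_swap_ad : regularExtension a b c d p = regularExtension d b c a p := by
  unfold regularExtension
  ring_nf

theorem mul_regularExtension_add_one (hab : a * b + 1 = rab ^ 2) (hac : a * c + 1 = rac ^ 2)
    (had : a * d + 1 = rad ^ 2) (hbc : b * c + 1 = rbc ^ 2) (hbd : b * d + 1 = rbd ^ 2)
    (hcd : c * d + 1 = rcd ^ 2) (h : a * b * c * d ≠ 1)
    (hp : p = rab * rac * rad * rbc * rbd * rcd) :
    a * regularExtension a b c d p + 1 =
      ((a * (rbc * rbd * rcd) + rab * rac * rad) / (a * b * c * d - 1)) ^ 2 := by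
  have h' : a * b * c * d - 1 ≠ 0 := sub_ne_zero.2 h
  subst hp
  unfold regularExtension
  field_simp
  linear_combination (a ^ 2 * rbd ^ 2 * rcd ^ 2) * hbc + (a ^ 2 * (b * c + 1) * rcd ^ 2) * hbd +
    (a ^ 2 * (b * c + 1) * (b * d + 1)) * hcd + (rac ^ 2 * rad ^ 2) * hab +
    ((a * b + 1) * rad ^ 2) * hac + ((a * b + 1) * (a * c + 1)) * had

theorem exists_mul_regularExtension_add_one_eq_sq (hab : a * b + 1 = rab ^ 2)
    (hac : a * c + 1 = rac ^ 2) (had : a * d + 1 = rad ^ 2) (hbc : b * c + 1 = rbc ^ 2)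
    (hbd : b * d + 1 = rbd ^ 2) (hcd : c * d + 1 = rcd ^ 2) (h : a * b * c * d ≠ 1)
    (hp : p = rab * rac * rad * rbc * rbd * rcd) :
    (∃ q, a * regularExtension a b c d p + 1 = q ^ 2) ∧
      (∃ q, b * regularExtension a b c d p + 1 = q ^ 2) ∧
      (∃ q, c * regularExtension a b c d p + 1 = q ^ 2) ∧
      (∃ q, d * regularExtension a b c d p + 1 = q ^ 2) := by
  have hba : b * a + 1 = rab ^ 2 := by linear_combination hab
  have hca : c * a + 1 = rac ^ 2 := by linear_combination hac
  have hcb : c * b + 1 = rbc ^ 2 := by linear_combination hbc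
  have hda : d * a + 1 = rad ^ 2 := by linear_combination had
  have hdb : d * b + 1 = rbd ^ 2 := by linear_combination hbd
  have hdc : d * c + 1 = rcd ^ 2 := by linear_combination hcd
  refine ⟨⟨_, mul_regularExtension_add_one hab hac had hbc hbd hcd h hp⟩, ?_, ?_, ?_⟩
  · rw [regularExtension_swap_ab]
    exact ⟨_, mul_regularExtension_add_one hba hbc hbd hac had hcd
      (by rwa [show b * a * c * d = a * b * c * d by ring]) (by rw [hp]; ring)⟩
  · rw [regularExtension_swap_ac]
    exact ⟨_, mul_regularExtension_add_one hcb hca hcd hba hbd had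
      (by rwa [show c * b * a * d = a * b * c * d by ring]) (by rw [hp]; ring)⟩
  · rw [regularExtension_swap_ad]
    exact ⟨_, mul_regularExtension_add_one hdb hdc hda hbc hba hca
      (by rwa [show d * b * c * a = a * b * c * d by ring]) (by rw [hp]; ring)⟩

end RegularExtension

def IsDiophantineTuple {ι K : Type*} [CommRing K] (v : ι → K) : Prop :=
  Pairwise fun i j => ∃ q, v i * v j + 1 = q ^ 2

theorem exists_mul_add_one_eq_sq_comm {K : Type*} [CommRing K] {a b : K}
    (h : ∃ q, a * b + 1 = q ^ 2) : ∃ q, b * a + 1 = q ^ 2 := by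
  rwa [mul_comm]

theorem isDiophantineTuple_regularExtension {K : Type*} [Field K]
    {a b c d p rab rac rad rbc rbd rcd : K} (hab : a * b + 1 = rab ^ 2) (hac : a * c + 1 = rac ^ 2)
    (had : a * d + 1 = rad ^ 2) (hbc : b * c + 1 = rbc ^ 2) (hbd : b * d + 1 = rbd ^ 2)
    (hcd : c * d + 1 = rcd ^ 2) (h : a * b * c * d ≠ 1)
    (hp : p = rab * rac * rad * rbc * rbd * rcd)
    (hext : ∃ q, regularExtension a b c d (-p) * regularExtension a b c d p + 1 = q ^ 2) :
    IsDiophantineTuple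
      ![a, b, c, d, regularExtension a b c d (-p), regularExtension a b c d p] := by
  -- The extension with `-p` is the one built from the root `-rab` instead of `rab`.
  obtain ⟨hae, hbe, hce, hde⟩ := exists_mul_regularExtension_add_one_eq_sq (p := -p)
    (rab := -rab) (by rw [neg_sq]; exact hab) hac had hbc hbd hcd h (by rw [hp]; ring)
  obtain ⟨haf, hbf, hcf, hdf⟩ :=
    exists_mul_regularExtension_add_one_eq_sq hab hac had hbc hbd hcd h hp
  have hab' : ∃ q, a * b + 1 = q ^ 2 := ⟨_, hab⟩
  have hac' : ∃ q, a * c + 1 = q ^ 2 := ⟨_, hac⟩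
  have had' : ∃ q, a * d + 1 = q ^ 2 := ⟨_, had⟩
  have hbc' : ∃ q, b * c + 1 = q ^ 2 := ⟨_, hbc⟩
  have hbd' : ∃ q, b * d + 1 = q ^ 2 := ⟨_, hbd⟩
  have hcd' : ∃ q, c * d + 1 = q ^ 2 := ⟨_, hcd⟩
  intro i j hij
  fin_cases i <;> fin_cases j <;>
    first
    | exact absurd rfl hij
    | assumption
    | exact exists_mul_add_one_eq_sq_comm (by assumption)

theorem IsDiophantineTuple.image_univ_mem {K : Type*} [CommRing K] [DecidableEq K] {n : ℕ}
    {v : Fin n → K} (hv : IsDiophantineTuple v) (hinj : Injective v) (h0 : ∀ i, v i ≠ 0) :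
    univ.image v ∈ {S : Finset K | S.card = n ∧ (0 : K) ∉ S ∧
      ∀ a ∈ S, ∀ b ∈ S, a ≠ b → ∃ q : K, a * b + 1 = q ^ 2} := by
  refine ⟨by rw [card_image_of_injective _ hinj, card_univ, Fintype.card_fin], ?_, ?_⟩
  · simpa [eq_comm] using h0
  · simp only [mem_image, mem_univ, true_and]
    rintro _ ⟨i, rfl⟩ _ ⟨j, rfl⟩ hne
    exact hv (ne_of_apply_ne v hne)

theorem Set.infinite_of_eventually_mem_of_finite_fibers {α β : Type*} [Infinite α]
    {S : Set (Finset β)} {f : α → Finset β} {g : α → β} (hf : ∀ᶠ t in cofinite, f t ∈ S)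
    (hg : ∀ t, g t ∈ f t) (hfib : ∀ b, {t | g t = b}.Finite) : S.Infinite := by
  intro hS
  have hU : (⋃ F ∈ S, (F : Set β)).Finite := hS.biUnion fun F _ => F.finite_toSet
  have hpre : {t | f t ∈ S}.Finite :=
    (hU.preimage' fun b _ => hfib b).subset fun t ht => Set.mem_biUnion ht (hg t)
  exact frequently_cofinite_iff_infinite.1 hf.frequently hpre

theorem Polynomial.eventually_cofinite_eval_ne_zero {R : Type*} [CommRing R] [IsDomain R]
    {p : R[X]} (hp : p ≠ 0) : ∀ᶠ x in cofinite, p.eval x ≠ 0 :=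
  eventually_cofinite.2 (by simpa [IsRoot] using finite_setOfPred_isRoot hp)

section RationalFunction

variable {K : Type*} [Field K] {p q r s : K[X]} {x y : K}

theorem Polynomial.eventually_cofinite_eval_div_ne_eval_div (hq : q.eval x ≠ 0) (hs : s.eval x ≠ 0)
    (h : p.eval x / q.eval x ≠ r.eval x / s.eval x) :
    ∀ᶠ t in cofinite, p.eval t / q.eval t ≠ r.eval t / s.eval t := by
  have ne_zero_of_eval : ∀ f : K[X], f.eval x ≠ 0 → f ≠ 0 := fun f hf hf0 => hf (by simp [hf0])
  have hD : (p * s - r * q).eval x ≠ 0 := by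
    rw [eval_sub, eval_mul, eval_mul, sub_ne_zero]
    rwa [Ne, div_eq_div_iff hq hs] at h
  filter_upwards [eventually_cofinite_eval_ne_zero (ne_zero_of_eval _ hq),
    eventually_cofinite_eval_ne_zero (ne_zero_of_eval _ hs),
    eventually_cofinite_eval_ne_zero (ne_zero_of_eval _ hD)] with t hqt hst hDt
  rw [eval_sub, eval_mul, eval_mul, sub_ne_zero] at hDt
  rwa [Ne, div_eq_div_iff hqt hst]

theorem Polynomial.eventually_cofinite_eval_div_ne (c : K) (hq : q.eval x ≠ 0)
    (h : p.eval x / q.eval x ≠ c) : ∀ᶠ t in cofinite, p.eval t / q.eval t ≠ c := by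
  simpa using eventually_cofinite_eval_div_ne_eval_div (r := C c) (s := 1) hq (by simp)
    (by simpa using h)

theorem Polynomial.finite_setOf_eval_div_eq (hx : q.eval x ≠ 0) (hy : q.eval y ≠ 0)
    (hxy : p.eval x / q.eval x ≠ p.eval y / q.eval y) (c : K) :
    {t | p.eval t / q.eval t = c}.Finite := by
  have of_ne : ∀ z, q.eval z ≠ 0 → p.eval z / q.eval z ≠ c →
      {t | p.eval t / q.eval t = c}.Finite := fun z hz hc => by
    simpa using eventually_cofinite.1 (eventually_cofinite_eval_div_ne c hz hc)
  by_cases hc : p.eval x / q.eval x = c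
  · exact of_ne y hy (hc ▸ hxy.symm)
  · exact of_ne x hx hc

end RationalFunction

namespace RationalSextuple

noncomputable def P₁ : ℚ[X] := X ^ 2 - 6 * X + 1
noncomputable def P₂ : ℚ[X] := X ^ 2 + 6 * X + 1
noncomputable def Q₁ : ℚ[X] := 7 * X ^ 4 + 50 * X ^ 2 + 7
noncomputable def Q₂ : ℚ[X] := 2 * X ^ 4 + 3 * X ^ 3 - 14 * X ^ 2 + 3 * X + 2
noncomputable def Q₃ : ℚ[X] := 2 * X ^ 4 - 3 * X ^ 3 - 14 * X ^ 2 - 3 * X + 2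
noncomputable def G : ℚ[X] :=
  37 * X ^ 12 - 885 * X ^ 10 + 9735 * X ^ 8 - 13678 * X ^ 6 + 9735 * X ^ 4 - 885 * X ^ 2 + 37
noncomputable def H₁ : ℚ[X] :=
  16 * X ^ 14 + 141 * X ^ 12 - 1500 * X ^ 10 + 7586 * X ^ 8 - 2724 * X ^ 6 + 165 * X ^ 4 +
    424 * X ^ 2 - 12
noncomputable def H₂ : ℚ[X] :=
  12 * X ^ 14 - 424 * X ^ 12 - 165 * X ^ 10 + 2724 * X ^ 8 - 7586 * X ^ 6 + 1500 * X ^ 4 -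
    141 * X ^ 2 - 16
noncomputable def R₃ : ℚ[X] :=
  64 * X ^ 20 + 1063 * X ^ 18 - 14850 * X ^ 16 + 143616 * X ^ 14 - 746142 * X ^ 12 +
    708210 * X ^ 10 - 746142 * X ^ 8 + 143616 * X ^ 6 - 14850 * X ^ 4 + 1063 * X ^ 2 + 64
noncomputable def R₄ : ℚ[X] :=
  36 * X ^ 20 - 2791 * X ^ 18 + 54810 * X ^ 16 - 167409 * X ^ 14 + 660192 * X ^ 12 -
    354105 * X ^ 10 + 85950 * X ^ 8 + 23793 * X ^ 6 - 39960 * X ^ 4 + 1728 * X ^ 2 - 100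
noncomputable def R₅ : ℚ[X] :=
  100 * X ^ 20 - 1728 * X ^ 18 + 39960 * X ^ 16 - 23793 * X ^ 14 - 85950 * X ^ 12 +
    354105 * X ^ 10 - 660192 * X ^ 8 + 167409 * X ^ 6 - 54810 * X ^ 4 + 2791 * X ^ 2 - 36

noncomputable def num : Fin 6 → ℚ[X] :=
  ![18 * X * (X - 1) * (X + 1), (X - 1) * P₂ ^ 2, (X + 1) * P₁ ^ 2,
    6 * (X - 1) * (X + 1) * P₁ * P₂ * R₃, -2 * X * Q₁ * Q₂ * Q₃ * R₄, 2 * X * Q₁ * Q₂ * Q₃ * R₅]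

noncomputable def den : Fin 6 → ℚ[X] :=
  ![P₁ * P₂, 6 * X * (X + 1) * P₁, 6 * X * (X - 1) * P₂, X * G ^ 2,
    3 * (X - 1) * (X + 1) * P₁ * P₂ * H₁ ^ 2, 3 * (X - 1) * (X + 1) * P₁ * P₂ * H₂ ^ 2]

-- At the finitely many poles, `entry t i` takes the junk value `x / 0 = 0`.
noncomputable def entry (t : ℚ) (i : Fin 6) : ℚ := (num i).eval t / (den i).eval t

-- The signs of these square roots decide which regular extension is `entry t 4`.
noncomputable def r₀₁ (t : ℚ) : ℚ := 2 * (t ^ 2 + 1) / P₁.eval t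
noncomputable def r₀₂ (t : ℚ) : ℚ := 2 * (t ^ 2 + 1) / P₂.eval t
noncomputable def r₀₃ (t : ℚ) : ℚ :=
  Q₁.eval t * (13 * t ^ 8 - 65 * t ^ 6 + 168 * t ^ 4 - 65 * t ^ 2 + 13) / G.eval t
noncomputable def r₁₂ (t : ℚ) : ℚ := (t ^ 2 + 1) / (6 * t)
noncomputable def r₁₃ (t : ℚ) : ℚ :=
  Q₂.eval t * (4 * t ^ 10 + 26 * t ^ 9 + 89 * t ^ 8 - 130 * t ^ 7 + 355 * t ^ 6 + 336 * t ^ 5 +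
    355 * t ^ 4 - 130 * t ^ 3 + 89 * t ^ 2 + 26 * t + 4) / (t * G.eval t)
noncomputable def r₂₃ (t : ℚ) : ℚ :=
  Q₃.eval t * (4 * t ^ 10 - 26 * t ^ 9 + 89 * t ^ 8 + 130 * t ^ 7 + 355 * t ^ 6 - 336 * t ^ 5 +
    355 * t ^ 4 + 130 * t ^ 3 + 89 * t ^ 2 - 26 * t + 4) / (t * G.eval t)
noncomputable def r₄₅ (t : ℚ) : ℚ :=
  (t ^ 2 + 1) * (576 * t ^ 32 - 45812 * t ^ 30 + 780704 * t ^ 28 - 562007 * t ^ 26 +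
    37723150 * t ^ 24 - 411809107 * t ^ 22 + 1122374152 * t ^ 20 - 2992467810 * t ^ 18 +
    5561754132 * t ^ 16 - 2992467810 * t ^ 14 + 1122374152 * t ^ 12 - 411809107 * t ^ 10 +
    37723150 * t ^ 8 - 562007 * t ^ 6 + 780704 * t ^ 4 - 45812 * t ^ 2 + 576) /
  (3 * (t - 1) * (t + 1) * P₁.eval t * P₂.eval t * H₁.eval t * H₂.eval t)

theorem eval_factors_ne_zero {t : ℚ} (hden : ∀ i, (den i).eval t ≠ 0) :
    t ≠ 0 ∧ t - 1 ≠ 0 ∧ t + 1 ≠ 0 ∧ P₁.eval t ≠ 0 ∧ P₂.eval t ≠ 0 ∧ G.eval t ≠ 0 ∧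
      H₁.eval t ≠ 0 ∧ H₂.eval t ≠ 0 := by
  have h1 := hden 1
  have h2 := hden 2
  have h3 := hden 3
  have h4 := hden 4
  have h5 := hden 5
  simp only [den, Matrix.cons_val, eval_mul, eval_pow, eval_X, eval_add, eval_sub, eval_one,
    eval_ofNat, mul_ne_zero_iff, pow_ne_zero_iff, ne_eq, OfNat.ofNat_ne_zero, not_false_eq_true,
    true_and] at h1 h2 h3 h4 h5
  tauto

theorem entry_mul_entry_add_one_eq_sq {t : ℚ} (hden : ∀ i, (den i).eval t ≠ 0) :
    entry t 0 * entry t 1 + 1 = r₀₁ t ^ 2 ∧ entry t 0 * entry t 2 + 1 = r₀₂ t ^ 2 ∧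
      entry t 0 * entry t 3 + 1 = r₀₃ t ^ 2 ∧ entry t 1 * entry t 2 + 1 = r₁₂ t ^ 2 ∧
      entry t 1 * entry t 3 + 1 = r₁₃ t ^ 2 ∧ entry t 2 * entry t 3 + 1 = r₂₃ t ^ 2 := by
  obtain ⟨h0, h1, h2, hP₁, hP₂, hG, -, -⟩ := eval_factors_ne_zero hden
  refine ⟨?_, ?_, ?_, ?_, ?_, ?_⟩ <;>
  · simp only [entry, num, den, r₀₁, r₀₂, r₀₃, r₁₂, r₁₃, r₂₃, Matrix.cons_val, eval_mul,
      eval_pow, eval_X, eval_add, eval_sub, eval_one, eval_ofNat]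
    field_simp
    simp only [P₁, P₂, Q₁, Q₂, Q₃, G, R₃, eval_mul, eval_pow, eval_X, eval_add, eval_sub,
      eval_one, eval_ofNat]
    ring

theorem entry_prod_sub_one {t : ℚ} (hden : ∀ i, (den i).eval t ≠ 0) :
    entry t 0 * entry t 1 * entry t 2 * entry t 3 - 1 =
      H₁.eval t * H₂.eval t / (t ^ 2 * G.eval t ^ 2) := by
  obtain ⟨h0, h1, h2, hP₁, hP₂, hG, -, -⟩ := eval_factors_ne_zero hden
  simp only [entry, num, den, Matrix.cons_val, eval_mul, eval_pow, eval_X, eval_add, eval_sub,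
    eval_one, eval_ofNat]
  field_simp
  simp only [P₁, P₂, G, H₁, H₂, R₃, eval_mul, eval_pow, eval_X, eval_add, eval_sub, eval_one,
    eval_ofNat]
  ring

theorem entry_four_eq {t : ℚ} (hden : ∀ i, (den i).eval t ≠ 0) :
    entry t 4 = regularExtension (entry t 0) (entry t 1) (entry t 2) (entry t 3)
      (-(r₀₁ t * r₀₂ t * r₀₃ t * r₁₂ t * r₁₃ t * r₂₃ t)) := by
  obtain ⟨h0, h1, h2, hP₁, hP₂, hG, hH₁, hH₂⟩ := eval_factors_ne_zero hden
  unfold regularExtension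
  rw [entry_prod_sub_one hden]
  simp only [entry, num, den, r₀₁, r₀₂, r₀₃, r₁₂, r₁₃, r₂₃, Matrix.cons_val, eval_mul, eval_pow,
    eval_X, eval_add, eval_sub, eval_one, eval_ofNat, eval_neg]
  field_simp
  simp only [P₁, P₂, Q₁, Q₂, Q₃, G, H₂, R₃, R₄, eval_mul, eval_pow, eval_X, eval_add, eval_sub,
    eval_one, eval_ofNat]
  ring

theorem entry_five_eq {t : ℚ} (hden : ∀ i, (den i).eval t ≠ 0) :
    entry t 5 = regularExtension (entry t 0) (entry t 1) (entry t 2) (entry t 3)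
      (r₀₁ t * r₀₂ t * r₀₃ t * r₁₂ t * r₁₃ t * r₂₃ t) := by
  obtain ⟨h0, h1, h2, hP₁, hP₂, hG, hH₁, hH₂⟩ := eval_factors_ne_zero hden
  unfold regularExtension
  rw [entry_prod_sub_one hden]
  simp only [entry, num, den, r₀₁, r₀₂, r₀₃, r₁₂, r₁₃, r₂₃, Matrix.cons_val, eval_mul, eval_pow,
    eval_X, eval_add, eval_sub, eval_one, eval_ofNat]
  field_simp
  simp only [P₁, P₂, Q₁, Q₂, Q₃, G, H₁, R₃, R₅, eval_mul, eval_pow, eval_X, eval_add, eval_sub,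
    eval_one, eval_ofNat]
  ring

theorem entry_four_mul_entry_five_add_one {t : ℚ} (hden : ∀ i, (den i).eval t ≠ 0) :
    entry t 4 * entry t 5 + 1 = r₄₅ t ^ 2 := by
  obtain ⟨h0, h1, h2, hP₁, hP₂, hG, hH₁, hH₂⟩ := eval_factors_ne_zero hden
  simp only [entry, num, den, r₄₅, Matrix.cons_val, eval_mul, eval_pow, eval_X, eval_add, eval_sub,
    eval_one, eval_ofNat, eval_neg]
  field_simp
  simp only [P₁, P₂, Q₁, Q₂, Q₃, H₁, H₂, R₄, R₅, eval_mul, eval_pow, eval_X, eval_add, eval_sub,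
    eval_one, eval_ofNat]
  ring

theorem den_eval_half_ne_zero (i : Fin 6) : (den i).eval (1 / 2) ≠ 0 := by
  fin_cases i <;> norm_num [den, P₁, P₂, G, H₁, H₂]

theorem entry_half :
    entry (1 / 2) = ![108 / 119, 289 / 252, -49 / 68, -843393140604 / 1028879549569,
      -57469402289728 / 145393246858671, 83594902600352 / 77453118042111] := by
  ext i
  fin_cases i <;> norm_num [entry, num, den, P₁, P₂, Q₁, Q₂, Q₃, G, H₁, H₂, R₃, R₄, R₅]

theorem injective_entry_half : Injective (entry (1 / 2)) := by
  rw [entry_half]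
  intro i j h
  fin_cases i <;> fin_cases j <;> first | rfl | norm_num at h

theorem eventually_den_ne_zero : ∀ᶠ t in cofinite, ∀ i, (den i).eval t ≠ 0 :=
  eventually_all.2 fun i => eventually_cofinite_eval_ne_zero fun h =>
    den_eval_half_ne_zero i (by rw [h, eval_zero])

theorem eventually_entry_ne_zero : ∀ᶠ t in cofinite, ∀ i, entry t i ≠ 0 :=
  eventually_all.2 fun i => eventually_cofinite_eval_div_ne 0 (den_eval_half_ne_zero i) <| by
    change entry (1 / 2) i ≠ 0
    rw [entry_half]
    fin_cases i <;> norm_num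

theorem eventually_injective_entry : ∀ᶠ t in cofinite, Injective (entry t) := by
  have hpair : ∀ i j, ∀ᶠ t in cofinite, i ≠ j → entry t i ≠ entry t j := by
    intro i j
    by_cases hij : i = j
    · exact Eventually.of_forall fun _ h => (h hij).elim
    · filter_upwards [eventually_cofinite_eval_div_ne_eval_div (den_eval_half_ne_zero i)
        (den_eval_half_ne_zero j) (injective_entry_half.ne hij)] with _ ht _ using ht
  filter_upwards [eventually_all.2 fun i => eventually_all.2 (hpair i)] with t ht i j h
  by_contra hij
  exact ht i j hij h

theorem finite_setOf_entry_zero_eq (c : ℚ) : {t | entry t 0 = c}.Finite :=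
  finite_setOf_eval_div_eq (x := 0) (y := 1 / 2) (by norm_num [den, P₁, P₂])
    (den_eval_half_ne_zero 0) (by norm_num [num, den, P₁, P₂]) c

theorem isDiophantineTuple_entry {t : ℚ} (hden : ∀ i, (den i).eval t ≠ 0) :
    IsDiophantineTuple (entry t) := by
  obtain ⟨h0, -, -, -, -, hG, hH₁, hH₂⟩ := eval_factors_ne_zero hden
  obtain ⟨h01, h02, h03, h12, h13, h23⟩ := entry_mul_entry_add_one_eq_sq hden
  have hprod : entry t 0 * entry t 1 * entry t 2 * entry t 3 ≠ 1 := by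
    rw [← sub_ne_zero, entry_prod_sub_one hden]
    exact div_ne_zero (mul_ne_zero hH₁ hH₂) (mul_ne_zero (pow_ne_zero 2 h0) (pow_ne_zero 2 hG))
  have hvec : entry t = ![entry t 0, entry t 1, entry t 2, entry t 3, entry t 4, entry t 5] := by
    ext i
    fin_cases i <;> rfl
  rw [hvec, entry_four_eq hden, entry_five_eq hden]
  refine isDiophantineTuple_regularExtension h01 h02 h03 h12 h13 h23 hprod rfl ⟨r₄₅ t, ?_⟩
  rw [← entry_four_eq hden, ← entry_five_eq hden]
  exact entry_four_mul_entry_five_add_one hden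

theorem eventually_image_entry_mem :
    ∀ᶠ t in cofinite, univ.image (entry t) ∈ {S : Finset ℚ | S.card = 6 ∧ (0 : ℚ) ∉ S ∧
      ∀ a ∈ S, ∀ b ∈ S, a ≠ b → ∃ q : ℚ, a * b + 1 = q ^ 2} := by
  filter_upwards [eventually_den_ne_zero, eventually_entry_ne_zero, eventually_injective_entry]
    with t hden h0 hinj
  exact (isDiophantineTuple_entry hden).image_univ_mem hinj h0

end RationalSextuple

/-- There are infinitely many rational Diophantine sextuples. -/
theorem stmt_15 :
    {S : Finset ℚ | S.card = 6 ∧ (0 : ℚ) ∉ S ∧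
      ∀ a ∈ S, ∀ b ∈ S, a ≠ b → ∃ q : ℚ, a * b + 1 = q ^ 2}.Infinite :=
  Set.infinite_of_eventually_mem_of_finite_fibers RationalSextuple.eventually_image_entry_mem
    (fun _ => mem_image_of_mem _ (mem_univ 0)) RationalSextuple.finite_setOf_entry_zero_eq
end
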